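/- arXiv:1602.03020 — 4 statements merged into one kernel-verified Lean document; each statement's English description precedes it below -/
import Mathlib

section
/- Let A be a finite alphabet, let Y be a finite set of pairwise non-confinal left-infinite words over A, and let Q be a positive integer. Then there exists q ∈ ℕ such that for every integer m ≥ q: (a) for all distinct y₁, y₂ ∈ Y, the gap satisfies g(tₘ y₁, tₘ y₂) > Q; and (b) for every y ∈ Y that is not periodic, g(tₘ y, tₘ y) > Q. -/
/- Left-infinite words over an alphabet `A` are functions `ℕ → A`;
`w n` is the letter at distance `n` from the right end. -/

variable {A : Type*}

/-- `app w z` appends the finite word `z` on the right of the left-infinite word `w`. -/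
def app (w : ℕ → A) (z : List A) : ℕ → A :=
  fun n => if h : n < z.length then z.get ⟨z.length - 1 - n, by omega⟩ else w (n - z.length)

/-- `suff m w` is the suffix of length `m` of `w`: the finite word `w (m-1) ⋯ w 1 w 0`. -/
def suff (m : ℕ) (w : ℕ → A) : List A :=
  List.ofFn (fun i : Fin m => w (m - 1 - i))

/-- Two left-infinite words are confinal if they share a common left-infinite prefix. -/
def Confinal (v₁ v₂ : ℕ → A) : Prop :=
  ∃ (y : ℕ → A) (z₁ z₂ : List A), v₁ = app y z₁ ∧ v₂ = app y z₂

/-- `negPow u hu` is the periodic left-infinite word `u⁻∞ = ⋯uuu`. -/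
def negPow (u : List A) (hu : u ≠ []) : ℕ → A :=
  fun n => u.get ⟨u.length - 1 - n % u.length, by
    have h : u.length ≠ 0 := fun h0 => hu (List.length_eq_zero_iff.mp h0)
    omega⟩

/-- A left-infinite word is periodic if it is `u⁻∞` for some nonempty finite word `u`. -/
def Periodic (w : ℕ → A) : Prop :=
  ∃ (u : List A) (hu : u ≠ []), w = negPow u hu

/-- The gap between two finite words `w₁, w₂`:
`g(w₁,w₂) = min {|u| : u ∈ A⁺, ∃ v ∈ A⁺, w₁u = vw₂ or w₂u = vw₁}`. -/
noncomputable def gap (w₁ w₂ : List A) : ℕ :=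
  sInf {n : ℕ | ∃ u v : List A, u ≠ [] ∧ v ≠ [] ∧ u.length = n ∧
    (w₁ ++ u = v ++ w₂ ∨ w₂ ++ u = v ++ w₁)}

/-- `listPow u n` is the `n`-fold concatenation `uⁿ`. -/
def listPow (u : List A) : ℕ → List A
  | 0 => []
  | n + 1 => u ++ listPow u n

/-- A nonempty finite word is primitive if it is not of the form `xⁿ` with `n ≥ 2`. -/
def Primitive (u : List A) : Prop :=
  u ≠ [] ∧ ∀ (x : List A) (n : ℕ), 2 ≤ n → u ≠ listPow x n

/-- `tk k w`: the longest suffix of `w` of length at most `k`. -/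
def tk (k : ℕ) (w : List A) : List A := w.drop (w.length - k)

/-- `ik k w`: the longest prefix of `w` of length at most `k`. -/
def ik (k : ℕ) (w : List A) : List A := w.take k

/-- The factor of `w = a₁⋯aₙ` of length `M` ending at the (1-indexed) position `m`:
`a_{m-M+1} ⋯ a_m`. -/
def factorAt (M : ℕ) (w : List A) (m : ℕ) : List A := (w.take m).drop (m - M)

/-- `m` is a bound of `w` w.r.t. the set `B ⊆ A^M` of borders. -/
def IsBound (B : Set (List A)) (M : ℕ) (w : List A) (m : ℕ) : Prop :=
  M ≤ m ∧ m ≤ w.length ∧ factorAt M w m ∈ B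

/- The splitting point of `w`: its last bound if it has one, and `|w|` otherwise. -/
open Classical in
noncomputable def splitPoint (B : Set (List A)) (M : ℕ) (w : List A) : ℕ :=
  if ∃ m, IsBound B M w m then sSup {m | IsBound B M w m} else w.length

/-- `Phik k w`: the sequence of all factors of `w` of length `k+1`, in the order
in which they occur in `w`. -/
def Phik (k : ℕ) (w : List A) : List (List A) :=
  List.ofFn (fun i : Fin (w.length - k) => (w.drop i).take (k + 1))

/-- A Lyndon word: a primitive word lexicographically minimal in its conjugacy class. -/
def IsLyndon [LinearOrder A] (u : List A) : Prop :=
  Primitive u ∧ ∀ w₁ w₂ : List A, u = w₁ ++ w₂ → u ≤ w₂ ++ w₁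

/-- `A^{-∞}`: the disjoint union of the nonempty finite words and the
left-infinite words over `A`. -/
def Ainf (A : Type*) := {l : List A // l ≠ []} ⊕ (ℕ → A)

/-- Multiplication on `A^{-∞}`: concatenation of finite words; appending a finite word
on the right of a left-infinite word; left-infinite words are right zeros. -/
def mulAinf : Ainf A → Ainf A → Ainf A
  | Sum.inl u, Sum.inl v => Sum.inl ⟨u.1 ++ v.1, fun h => u.2 (List.append_eq_nil_iff.mp h).1⟩
  | Sum.inl _, Sum.inr w => Sum.inr w
  | Sum.inr w, Sum.inl z => Sum.inr (app w z.1)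
  | Sum.inr _, Sum.inr w => Sum.inr w

/-! An overlap `suff m y₁ ++ u = v ++ suff m y₂` with `|u| = n` forces `y₂ j = y₁ (j - n)` for
`n ≤ j < m`. If this held for all `j ≥ n`, `y₂` would be `y₁` with a word of length `n` appended
(and for `y₁ = y₂`, `y₁` would be periodic of period `n`). So each of the finitely many triples
`(y₁, y₂, n)` with `n ≤ Q` has a mismatch, and suffixes longer than all of them admit no overlap
of length at most `Q`. -/

open Filter

@[simp]
lemma suff_length (m : ℕ) (y : ℕ → A) : (suff m y).length = m := by simp [suff]

@[simp]
lemma suff_getElem (m : ℕ) (y : ℕ → A) (i : ℕ) (h : i < (suff m y).length) :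
    (suff m y)[i] = y (m - 1 - i) := by
  simp [suff]

lemma suff_ne_nil {m : ℕ} (hm : 0 < m) (y : ℕ → A) : suff m y ≠ [] :=
  List.ne_nil_of_length_pos (by simpa using hm)

lemma confinal_of_shift {y₁ y₂ : ℕ → A} {n : ℕ}
    (h : ∀ j, n ≤ j → y₂ j = y₁ (j - n)) : Confinal y₁ y₂ := by
  refine ⟨y₁, [], suff n y₂, ?_, ?_⟩
  · funext j; simp [app]
  · funext j
    by_cases hj : j < n
    · simp only [app, suff_length, dif_pos hj, List.get_eq_getElem, suff_getElem]
      congr 1; omega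
    · simp only [app, suff_length, dif_neg hj]
      exact h j (by omega)

lemma periodic_of_shift {y : ℕ → A} {n : ℕ} (hn : 0 < n)
    (h : ∀ j, n ≤ j → y j = y (j - n)) : Periodic y := by
  have hmod : ∀ j, y j = y (j % n) := by
    intro j
    induction j using Nat.strong_induction_on with
    | _ j ih =>
      by_cases hj : j < n
      · rw [Nat.mod_eq_of_lt hj]
      · rw [h j (by omega), ih (j - n) (by omega), ← Nat.mod_eq_sub_mod (by omega)]
  refine ⟨suff n y, suff_ne_nil hn y, funext fun j => ?_⟩
  have : j % n < n := Nat.mod_lt _ hn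
  simp only [negPow, List.get_eq_getElem, suff_length, suff_getElem, hmod j]
  congr 1; omega

lemma shift_of_suff_append_eq {m : ℕ} {y₁ y₂ : ℕ → A} {u v : List A}
    (h : suff m y₁ ++ u = v ++ suff m y₂) {j : ℕ} (hj : u.length ≤ j) (hjm : j < m) :
    y₂ j = y₁ (j - u.length) := by
  have hv : v.length = u.length := by
    have := congrArg List.length h
    simp only [List.length_append, suff_length] at this
    omega
  have hi := List.getElem_of_eq h (i := u.length + (m - 1 - j)) (by simp; omega)
  rw [List.getElem_append_left (by simp; omega), List.getElem_append_right (by omega),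
    suff_getElem, suff_getElem] at hi
  convert hi.symm using 2 <;> omega

lemma lt_gap_of_forall_ne {w₁ w₂ : List A} {Q : ℕ} (h₁ : w₁ ≠ []) (h₂ : w₂ ≠ [])
    (h : ∀ u v : List A, u ≠ [] → u.length ≤ Q → w₁ ++ u ≠ v ++ w₂ ∧ w₂ ++ u ≠ v ++ w₁) :
    Q < gap w₁ w₂ := by
  by_contra! hle
  obtain ⟨u, v, hu, -, hlen, heq⟩ := Nat.sInf_mem (s := {n : ℕ | ∃ u v : List A, u ≠ [] ∧
    v ≠ [] ∧ u.length = n ∧ (w₁ ++ u = v ++ w₂ ∨ w₂ ++ u = v ++ w₁)})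
    ⟨_, w₂, w₁, h₂, h₁, rfl, Or.inl rfl⟩
  have hne := h u v hu (hlen ▸ hle)
  exact heq.elim hne.1 hne.2

lemma eventually_exists_ne_shift {y₁ y₂ : ℕ → A} {n : ℕ}
    (h : ¬ ∀ j, n ≤ j → y₂ j = y₁ (j - n)) :
    ∀ᶠ m in atTop, ∃ j, n ≤ j ∧ j < m ∧ y₂ j ≠ y₁ (j - n) := by
  push Not at h
  obtain ⟨j, hj, hne⟩ := h
  filter_upwards [eventually_gt_atTop j] with m hm using ⟨j, hj, hm, hne⟩

lemma eventually_lt_gap_suff {y₁ y₂ : ℕ → A} {Q : ℕ}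
    (h : ∀ n, 0 < n → n ≤ Q →
      (¬ ∀ j, n ≤ j → y₂ j = y₁ (j - n)) ∧ ¬ ∀ j, n ≤ j → y₁ j = y₂ (j - n)) :
    ∀ᶠ m in atTop, Q < gap (suff m y₁) (suff m y₂) := by
  have hmismatch : ∀ᶠ m in atTop, ∀ n ∈ Set.Icc 1 Q,
      (∃ j, n ≤ j ∧ j < m ∧ y₂ j ≠ y₁ (j - n)) ∧ ∃ j, n ≤ j ∧ j < m ∧ y₁ j ≠ y₂ (j - n) :=
    (Set.finite_Icc 1 Q).eventually_all.2 fun n hn =>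
      have hnQ := h n hn.1 hn.2
      (eventually_exists_ne_shift hnQ.1).and (eventually_exists_ne_shift hnQ.2)
  filter_upwards [hmismatch, eventually_gt_atTop 0] with m hm hm0
  refine lt_gap_of_forall_ne (suff_ne_nil hm0 _) (suff_ne_nil hm0 _) fun u v hu hQ => ?_
  have hn : u.length ∈ Set.Icc 1 Q := ⟨List.length_pos_iff.2 hu, hQ⟩
  obtain ⟨⟨j, hj, hjm, hne⟩, ⟨k, hk, hkm, hne'⟩⟩ := hm _ hn
  exact ⟨fun he => hne (shift_of_suff_append_eq he hj hjm),
    fun he => hne' (shift_of_suff_append_eq he hk hkm)⟩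

theorem stmt0_general (Y : Set (ℕ → A)) (hYfin : Y.Finite)
    (hY : ∀ y₁ ∈ Y, ∀ y₂ ∈ Y, y₁ ≠ y₂ → ¬ Confinal y₁ y₂)
    (Q : ℕ) :
    ∃ q : ℕ, ∀ m : ℕ, q ≤ m →
      (∀ y₁ ∈ Y, ∀ y₂ ∈ Y, y₁ ≠ y₂ → Q < gap (suff m y₁) (suff m y₂)) ∧
      (∀ y ∈ Y, ¬ Periodic y → Q < gap (suff m y) (suff m y)) := by
  refine eventually_atTop.1 (Eventually.and ?_ ?_)
  · refine hYfin.eventually_all.2 fun y₁ h₁ => hYfin.eventually_all.2 fun y₂ h₂ =>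
      eventually_imp_distrib_left.2 fun h12 => eventually_lt_gap_suff fun n _ _ => ⟨?_, ?_⟩
    · exact fun h => hY y₁ h₁ y₂ h₂ h12 (confinal_of_shift h)
    · exact fun h => hY y₂ h₂ y₁ h₁ h12.symm (confinal_of_shift h)
  · refine hYfin.eventually_all.2 fun y _ => eventually_imp_distrib_left.2 fun hper =>
      eventually_lt_gap_suff fun n hn _ => ?_
    have hshift := fun h => hper (periodic_of_shift hn h)
    exact ⟨hshift, hshift⟩

/-- for a finite set `Y` of pairwise non-confinal left-infinite words and
`Q > 0`, there is `q` such that for all `m ≥ q`: (a) distinct members of `Y` have suffixes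
of length `m` with gap `> Q`; (b) non-periodic members have self-gap `> Q`. -/
theorem stmt0 [Fintype A] (Y : Set (ℕ → A)) (hYfin : Y.Finite)
    (hY : ∀ y₁ ∈ Y, ∀ y₂ ∈ Y, y₁ ≠ y₂ → ¬ Confinal y₁ y₂)
    (Q : ℕ) (hQ : 0 < Q) :
    ∃ q : ℕ, ∀ m : ℕ, q ≤ m →
      (∀ y₁ ∈ Y, ∀ y₂ ∈ Y, y₁ ≠ y₂ → Q < gap (suff m y₁) (suff m y₂)) ∧
      (∀ y ∈ Y, ¬ Periodic y → Q < gap (suff m y) (suff m y)) :=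
  stmt0_general Y hYfin hY Q
end

section
/- Let A be a finite alphabet, M ≥ 1 an integer, B ⊆ A^M a set of borders, and k ≥ M. For a word w = a₁⋯a_{k+1} ∈ A^{k+1}, let w₁ = a₁⋯a_k and w₂ = a₂⋯a_{k+1} be its two factors of length k. Then there exists a finite word x ∈ A* such that a₁ · l_{w₂} = l_{w₁} · x; equivalently, the splitting points satisfy s(w₁) ≤ s(w₂) + 1. -/
/- Left-infinite words over an alphabet `A` are functions `ℕ → A`;
`w n` is the letter at distance `n` from the right end. -/

variable {A : Type*}

/-! The border occurrence ending at position `m + 1` of `a₁⋯a_k` is the one ending at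
position `m` of `a₂⋯a_{k+1}`, so for `m ≥ M` the bounds `m + 1 ≤ k` of the first word are
exactly the bounds `m < k` of the second. Hence `s(w₁) ≤ s(w₂) + 1`, and then `l_{w₁}` is a
prefix of `a₁ l_{w₂} = a₁⋯a_{s(w₂)+1}`. -/

section Splitting

variable (B : Set (List A)) (M : ℕ)

lemma factorAt_take_of_le {w : List A} {m k : ℕ} (h : m ≤ k) :
    factorAt M (w.take k) m = factorAt M w m := by
  rw [factorAt, factorAt, List.take_take, min_eq_left h]

lemma factorAt_drop_one {w : List A} {m : ℕ} (h : M ≤ m) :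
    factorAt M (w.drop 1) m = factorAt M w (m + 1) := by
  rw [factorAt, factorAt, List.take_drop, List.drop_drop, add_comm 1 m]
  congr 1
  omega

lemma isBound_take_succ_iff {w : List A} {m k : ℕ} (hk : k < w.length) (hm : M ≤ m) :
    IsBound B M (w.take k) (m + 1) ↔ IsBound B M (w.drop 1) m ∧ m < k := by
  simp only [IsBound, List.length_take, List.length_drop, factorAt_drop_one M hm]
  constructor
  · rintro ⟨-, hmk, hB⟩
    rw [factorAt_take_of_le M (by omega)] at hB
    exact ⟨⟨hm, by omega, hB⟩, by omega⟩
  · rintro ⟨⟨-, -, hB⟩, hmk⟩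
    rw [factorAt_take_of_le M hmk]
    exact ⟨by omega, by omega, hB⟩

lemma bddAbove_setOf_isBound (w : List A) : BddAbove {m | IsBound B M w m} :=
  ⟨w.length, fun _ hm => hm.2.1⟩

lemma isBound_splitPoint {w : List A} (h : ∃ m, IsBound B M w m) :
    IsBound B M w (splitPoint B M w) := by
  rw [splitPoint, if_pos h]
  exact Nat.sSup_mem h (bddAbove_setOf_isBound B M w)

lemma IsBound.le_splitPoint {w : List A} {m : ℕ} (h : IsBound B M w m) :
    m ≤ splitPoint B M w := by
  rw [splitPoint, if_pos ⟨m, h⟩]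
  exact le_csSup (bddAbove_setOf_isBound B M w) h

lemma splitPoint_eq_length {w : List A} (h : ∀ m, ¬IsBound B M w m) :
    splitPoint B M w = w.length := by
  rw [splitPoint, if_neg (not_exists.mpr h)]

lemma min_le_splitPoint (w : List A) : min M w.length ≤ splitPoint B M w := by
  by_cases h : ∃ m, IsBound B M w m
  · exact min_le_of_left_le (isBound_splitPoint B M h).1
  · exact (min_le_right _ _).trans (splitPoint_eq_length B M (not_exists.mp h)).ge

lemma splitPoint_take_le_splitPoint_drop_one_add_one {w : List A} {k : ℕ} (hk : k < w.length) :
    splitPoint B M (w.take k) ≤ splitPoint B M (w.drop 1) + 1 := by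
  by_cases h : ∃ m, IsBound B M (w.take k) m
  · have hs := isBound_splitPoint B M h
    rcases le_or_gt (splitPoint B M (w.take k)) M with hsM | hMs
    · have hMk : M ≤ k := hs.1.trans (hs.2.1.trans (List.length_take_le _ _))
      have := min_le_splitPoint B M (w.drop 1)
      rw [List.length_drop, min_eq_left (by omega)] at this
      omega
    · rw [← Nat.sub_add_cancel (M.zero_le.trans_lt hMs)] at hs
      have := ((isBound_take_succ_iff B M hk (Nat.le_sub_one_of_lt hMs)).mp hs).1.le_splitPoint
      omega
  · rw [splitPoint_eq_length B M (not_exists.mp h), List.length_take, min_eq_left hk.le]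
    by_contra! hlt
    have hbound : ∃ m, IsBound B M (w.drop 1) m := by
      by_contra! hnone
      rw [splitPoint_eq_length B M hnone, List.length_drop] at hlt
      omega
    have hs := isBound_splitPoint B M hbound
    exact h ⟨_, (isBound_take_succ_iff B M hk hs.1).mpr ⟨hs, by omega⟩⟩

end Splitting

theorem stmt1_general (M : ℕ) (B : Set (List A)) (k : ℕ)
    (w : List A) (hw : w.length = k + 1) :
    (∃ x : List A,
        w.take 1 ++ (w.drop 1).take (splitPoint B M (w.drop 1)) =
          (w.take k).take (splitPoint B M (w.take k)) ++ x) ∧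
      splitPoint B M (w.take k) ≤ splitPoint B M (w.drop 1) + 1 := by
  have hle := splitPoint_take_le_splitPoint_drop_one_add_one B M (show k < w.length by omega)
  refine ⟨?_, hle⟩
  rw [← List.take_add, List.take_take, add_comm]
  obtain ⟨x, hx⟩ := List.take_prefix_take_left (l := w) ((min_le_left _ k).trans hle)
  exact ⟨x, hx.symm⟩

/-- for `w = a₁⋯a_{k+1}`, `w₁ = a₁⋯a_k`, `w₂ = a₂⋯a_{k+1}`, there is `x` with
`a₁ · l_{w₂} = l_{w₁} · x`; equivalently `s(w₁) ≤ s(w₂) + 1`. -/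
theorem stmt1 [Fintype A] (M : ℕ) (hM : 1 ≤ M) (B : Set (List A))
    (hB : ∀ b ∈ B, b.length = M) (k : ℕ) (hk : M ≤ k)
    (w : List A) (hw : w.length = k + 1) :
    (∃ x : List A,
        w.take 1 ++ (w.drop 1).take (splitPoint B M (w.drop 1)) =
          (w.take k).take (splitPoint B M (w.take k)) ++ x) ∧
      splitPoint B M (w.take k) ≤ splitPoint B M (w.drop 1) + 1 :=
  stmt1_general M B k w hw
end

section
/- Let A be a finite alphabet, let M > Q ≥ 1 be integers, let k = M + Q, and let B ⊆ A^M be a set of borders such that g(b₁, b₂) > Q for all distinct b₁, b₂ ∈ B. Let w ∈ A^k be a word of length k that has a bound, let ℓ be its last bound, and suppose that g(w₍ℓ₎, w₍ℓ₎) > Q. Then ℓ is the unique bound of w. -/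
/- Left-infinite words over an alphabet `A` are functions `ℕ → A`;
`w n` is the letter at distance `n` from the right end. -/

variable {A : Type*}

theorem List.drop_take_append_drop_take {α : Type*} (l : List α) {a b c : ℕ}
    (hab : a ≤ b) (hbc : b ≤ c) :
    (l.take b).drop a ++ (l.take c).drop b = (l.take c).drop a := by
  rw [List.drop_take, List.drop_take, List.drop_take, show c - a = (b - a) + (c - b) by omega,
    List.take_add, List.drop_drop, Nat.add_sub_cancel' hab]

theorem gap_le_length_of_append_eq {w₁ w₂ u v : List A} (hu : u ≠ []) (hv : v ≠ [])
    (h : w₁ ++ u = v ++ w₂) : gap w₁ w₂ ≤ u.length :=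
  Nat.sInf_le ⟨u, v, hu, hv, rfl, Or.inl h⟩

/-- Between bounds `m < ℓ` the border at `m`, extended by the letters `a_{m+1} ⋯ a_ℓ`,
ends with the border at `ℓ`. -/
theorem gap_factorAt_le_sub {M m ℓ : ℕ} {w : List A} (hMm : M ≤ m) (hmℓ : m < ℓ)
    (hℓ : ℓ ≤ w.length) : gap (factorAt M w m) (factorAt M w ℓ) ≤ ℓ - m := by
  have hlen : ((w.take ℓ).drop m).length = ℓ - m := by
    simp only [List.length_drop, List.length_take]; omega
  refine hlen ▸ gap_le_length_of_append_eq (v := (w.take (ℓ - M)).drop (m - M)) ?_ ?_ ?_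
  · rw [← List.length_pos_iff, hlen]; omega
  · rw [← List.length_pos_iff, List.length_drop, List.length_take]; omega
  · unfold factorAt
    rw [List.drop_take_append_drop_take w (by omega) (by omega),
      List.drop_take_append_drop_take w (by omega) (by omega)]

theorem stmt8_general (M Q : ℕ)
    (B : Set (List A))
    (hgap : ∀ b₁ ∈ B, ∀ b₂ ∈ B, b₁ ≠ b₂ → Q < gap b₁ b₂)
    (w : List A) (hw : w.length = M + Q)
    (ℓ : ℕ) (hℓ : IsBound B M w ℓ) (hlast : ∀ m, IsBound B M w m → m ≤ ℓ)
    (hself : Q < gap (factorAt M w ℓ) (factorAt M w ℓ)) :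
    ∀ m, IsBound B M w m → m = ℓ := by
  intro m hm
  by_contra hne
  have hmℓ : m < ℓ := lt_of_le_of_ne (hlast m hm) hne
  obtain ⟨hMm, -, hmB⟩ := hm
  obtain ⟨-, hℓw, hℓB⟩ := hℓ
  have hgap_le : gap (factorAt M w m) (factorAt M w ℓ) ≤ Q :=
    (gap_factorAt_le_sub hMm hmℓ hℓw).trans (by omega)
  by_cases heq : factorAt M w m = factorAt M w ℓ
  · rw [heq] at hgap_le
    omega
  · have := hgap _ hmB _ hℓB heq
    omega

/-- let `k = M + Q` and let `w ∈ A^k` have last bound `ℓ` whose border has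
self-gap `> Q`; then `ℓ` is the unique bound of `w`. -/
theorem stmt8 [Fintype A] (M Q : ℕ) (hQ : 1 ≤ Q) (hQM : Q < M)
    (B : Set (List A)) (hB : ∀ b ∈ B, b.length = M)
    (hgap : ∀ b₁ ∈ B, ∀ b₂ ∈ B, b₁ ≠ b₂ → Q < gap b₁ b₂)
    (w : List A) (hw : w.length = M + Q)
    (ℓ : ℕ) (hℓ : IsBound B M w ℓ) (hlast : ∀ m, IsBound B M w m → m ≤ ℓ)
    (hself : Q < gap (factorAt M w ℓ) (factorAt M w ℓ)) :
    ∀ m, IsBound B M w m → m = ℓ :=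
  stmt8_general M Q B hgap w hw ℓ hℓ hlast hself
end

section
/- Let u be a primitive word over a finite alphabet A, let p ≥ 2 be an integer, and let x, z be finite words with uᵖ x = z uᵖ and 0 < |z| ≤ (p−1)·|u|. Then z = u^d for some integer d ≥ 1; in particular |u| divides |z|. -/
/- Left-infinite words over an alphabet `A` are functions `ℕ → A`;
`w n` is the letter at distance `n` from the right end. -/

variable {A : Type*}

/-!
The equation `uᵖ x = z uᵖ` says that `uᵖ` has period `|z|`; it also has period `|u|`, and the
bound `|z| ≤ (p - 1)|u|` is the length condition of the Fine–Wilf theorem, so `uᵖ`, hence `u`,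
has period `gcd(|u|, |z|)`. A primitive word has no proper period dividing its length, so `|u|`
divides `|z|`, and `z`, a prefix of `uᵖ`, is a power of `u`.
-/

theorem listPow_length (u : List A) (n : ℕ) : (listPow u n).length = n * u.length := by
  induction n with
  | zero => simp [listPow]
  | succ n ih => simp [listPow, ih, Nat.succ_mul, Nat.add_comm]

theorem listPow_add (u : List A) (m n : ℕ) :
    listPow u (m + n) = listPow u m ++ listPow u n := by
  induction m with
  | zero => simp [listPow]
  | succ m ih => simp [listPow, Nat.succ_add, ih]

theorem listPow_succ' (u : List A) (n : ℕ) : listPow u (n + 1) = listPow u n ++ u := by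
  rw [listPow_add]
  simp [listPow]

theorem take_listPow_of_le (u : List A) {m n : ℕ} (h : m ≤ n) :
    (listPow u n).take (m * u.length) = listPow u m := by
  obtain ⟨k, rfl⟩ := Nat.exists_eq_add_of_le h
  rw [listPow_add, ← listPow_length]
  exact List.take_left

theorem prefix_listPow (u : List A) {n : ℕ} (hn : n ≠ 0) : u <+: listPow u n := by
  obtain ⟨n, rfl⟩ := Nat.exists_eq_succ_of_ne_zero hn
  exact List.prefix_append u _

theorem hasPeriod_listPow (u : List A) (n : ℕ) : (listPow u n).HasPeriod u.length := by
  rcases Nat.eq_zero_or_pos n with rfl | hn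
  · exact List.hasPeriod_empty _
  · have htake : (listPow u n).take u.length = u :=
      List.prefix_iff_eq_take.mp (prefix_listPow u hn.ne') |>.symm
    rw [List.HasPeriod, htake, ← listPow, listPow_succ']
    exact List.prefix_append _ _

theorem List.take_length_eq_of_append_eq_append {w x z : List A} (h : w ++ x = z ++ w)
    (hz : z.length ≤ w.length) : w.take z.length = z := by
  simpa [List.take_append_of_le_length hz] using congrArg (List.take z.length) h

theorem List.hasPeriod_of_append_eq_append {w x z : List A} (h : w ++ x = z ++ w)
    (hz : z.length ≤ w.length) : w.HasPeriod z.length := by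
  rw [List.HasPeriod, List.take_length_eq_of_append_eq_append h hz, ← h]
  exact List.prefix_append w x

theorem List.HasPeriod.eq_listPow {w : List A} {g : ℕ} (hw : w.HasPeriod g) {k : ℕ}
    (hk : w.length = k * g) : w = listPow (w.take g) k := by
  induction k generalizing w with
  | zero => simpa [listPow] using hk
  | succ k ih =>
    have hrest : (w.drop g).HasPeriod g := hw.infix (List.drop_suffix g w).isInfix
    have hrest_len : (w.drop g).length = k * g := by simp [hk, Nat.succ_mul]
    have hhead : (w.drop g).take g = w.take g ∨ k = 0 := by
      rcases Nat.eq_zero_or_pos k with rfl | hk0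
      · exact .inr rfl
      · left
        rw [List.prefix_iff_eq_take.mp (hw.drop_prefix g), List.take_take, hrest_len,
          Nat.min_eq_left (Nat.le_mul_of_pos_left g hk0)]
    conv_lhs => rw [← List.take_append_drop g w, ih hrest hrest_len]
    rcases hhead with h | rfl
    · rw [h, listPow]
    · simp [listPow]

theorem Primitive.eq_length_of_hasPeriod {u : List A} (hu : Primitive u) {g : ℕ}
    (hdvd : g ∣ u.length) (hper : u.HasPeriod g) : g = u.length := by
  obtain ⟨k, hk⟩ := hdvd
  by_contra hne
  have hk2 : 2 ≤ k := by
    rcases k with _ | _ | k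
    · exact absurd (List.length_eq_zero_iff.mp (by simpa using hk)) hu.1
    · exact absurd (by simpa using hk.symm) hne
    · omega
  exact hu.2 _ k hk2 (hper.eq_listPow (by rw [hk, Nat.mul_comm]))

theorem Primitive.length_dvd_of_hasPeriod_listPow {u : List A} (hu : Primitive u) {n q : ℕ}
    (hper : (listPow u n).HasPeriod q) (hq : q + u.length ≤ n * u.length) :
    u.length ∣ q := by
  have hL : 0 < u.length := List.length_pos_iff.mpr hu.1
  have hn : n ≠ 0 := by rintro rfl; omega
  have hgcd : (listPow u n).HasPeriod (u.length.gcd q) :=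
    (hasPeriod_listPow u n).gcd hper (by rw [listPow_length]; omega)
  have hgcd_eq : u.length.gcd q = u.length :=
    hu.eq_length_of_hasPeriod (Nat.gcd_dvd_left _ _)
      (hgcd.infix (prefix_listPow u hn).isInfix)
  exact hgcd_eq ▸ Nat.gcd_dvd_right _ _

theorem stmt10_general (u : List A) (hu : Primitive u) (p : ℕ)
    (x z : List A) (h : listPow u p ++ x = z ++ listPow u p)
    (hz : 0 < z.length) (hz' : z.length ≤ (p - 1) * u.length) :
    (∃ d : ℕ, 1 ≤ d ∧ z = listPow u d) ∧ u.length ∣ z.length := by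
  obtain ⟨p, rfl⟩ : ∃ p', p = p' + 1 := ⟨p - 1, by rcases p with _ | p <;> simp_all⟩
  rw [Nat.add_sub_cancel] at hz'
  have hzp : z.length + u.length ≤ (p + 1) * u.length := by rw [Nat.succ_mul]; omega
  have hzw : z.length ≤ (listPow u (p + 1)).length := by rw [listPow_length]; omega
  have hper := List.hasPeriod_of_append_eq_append h hzw
  obtain ⟨d, hd⟩ := hu.length_dvd_of_hasPeriod_listPow hper hzp
  have hdp : d ≤ p + 1 := by
    rw [hd, Nat.mul_comm] at hzp
    exact Nat.le_of_mul_le_mul_right (by omega) (List.length_pos_iff.mpr hu.1)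
  have hzd : z = listPow u d := by
    rw [← take_listPow_of_le u hdp, Nat.mul_comm, ← hd,
      List.take_length_eq_of_append_eq_append h hzw]
  refine ⟨⟨d, Nat.pos_of_ne_zero ?_, hzd⟩, d, hd⟩
  rintro rfl
  rw [Nat.mul_zero] at hd
  omega

/-- if `u` is primitive, `p ≥ 2`, `uᵖ x = z uᵖ` and `0 < |z| ≤ (p-1)|u|`,
then `z = u^d` for some `d ≥ 1`; in particular `|u|` divides `|z|`. -/
theorem stmt10 [Fintype A] (u : List A) (hu : Primitive u) (p : ℕ) (hp : 2 ≤ p)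
    (x z : List A) (h : listPow u p ++ x = z ++ listPow u p)
    (hz : 0 < z.length) (hz' : z.length ≤ (p - 1) * u.length) :
    (∃ d : ℕ, 1 ≤ d ∧ z = listPow u d) ∧ u.length ∣ z.length :=
  stmt10_general u hu p x z h hz hz'
end
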